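/- Let A be a real m×n matrix with no zero row and let b ∈ ℝ^m. Run the RKAS iteration from x⁰ = 0: at step k a row index i_k is drawn independently with probability ‖A_{i_k,:}‖₂²/‖A‖_F², and x^{k+1} = x^k − α_k A_{i_k,:}ᵀ with α_k = ⟨A A_{i_k,:}ᵀ, A x^k − b⟩ / ‖A A_{i_k,:}ᵀ‖₂². Set ε₁ = ‖A x⁰ − A x̄‖₂² and let ε > 0. If ε₁ > ε σ_min(A)² and k ≥ log(ε₁/(ε σ_min(A)²)) · ‖A‖_F² ‖A‖₂² / σ_min(A)⁴, then E[‖x^k − x̄‖₂²] ≤ ε, where E[g(x^k)] = ∑_{(i_0,…,i_{k−1}) ∈ [m]^k} (∏_{j<k} ‖A_{i_j,:}‖₂²/‖A‖_F²) · g(x^k(i_0,…,i_{k−1})). -/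

import Mathlib

open Matrix
open scoped RealInnerProductSpace

/-- `mulE A x` is the matrix-vector product `A x`, viewed as a map between
Euclidean spaces (so that `‖·‖` is the Euclidean norm and `⟪·,·⟫` the dot product). -/
noncomputable def mulE {m n : ℕ} (A : Matrix (Fin m) (Fin n) ℝ)
    (x : EuclideanSpace ℝ (Fin n)) : EuclideanSpace ℝ (Fin m) :=
  Matrix.toEuclideanLin A x

/-- `rowE A i` is the `i`-th row of `A` (i.e. the vector `A_{i,:}ᵀ`),
viewed as an element of Euclidean space. -/
noncomputable def rowE {m n : ℕ} (A : Matrix (Fin m) (Fin n) ℝ) (i : Fin m) :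
    EuclideanSpace ℝ (Fin n) :=
  (EuclideanSpace.equiv (Fin n) ℝ).symm (A i)

/-- One step of the RKAS method: `x⁺ = x − α A_{i,:}ᵀ` with the adaptive
stepsize `α = ⟨A A_{i,:}ᵀ, A x − b⟩ / ‖A A_{i,:}ᵀ‖²`. -/
noncomputable def rkasStep {m n : ℕ} (A : Matrix (Fin m) (Fin n) ℝ)
    (b : EuclideanSpace ℝ (Fin m)) (x : EuclideanSpace ℝ (Fin n)) (i : Fin m) :
    EuclideanSpace ℝ (Fin n) :=
  x - (⟪mulE A (rowE A i), mulE A x - b⟫ / ‖mulE A (rowE A i)‖ ^ 2) • rowE A i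

/-- `frobSq A = ‖A‖_F²`, the squared Frobenius norm of `A`. -/
noncomputable def frobSq {m n : ℕ} (A : Matrix (Fin m) (Fin n) ℝ) : ℝ :=
  ∑ i, ∑ j, A i j ^ 2

/-- `rkasSeq A b x0 k s` is the RKAS iterate `x^k` obtained from the initial
point `x0` using the row indices `s = (i_0, …, i_{k-1}) ∈ [m]^k`. -/
noncomputable def rkasSeq {m n : ℕ} (A : Matrix (Fin m) (Fin n) ℝ)
    (b : EuclideanSpace ℝ (Fin m)) (x0 : EuclideanSpace ℝ (Fin n)) :
    (k : ℕ) → (Fin k → Fin m) → EuclideanSpace ℝ (Fin n)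
  | 0, _ => x0
  | k + 1, s => rkasStep A b (rkasSeq A b x0 k fun j => s j.castSucc) (s (Fin.last k))

variable {m n : ℕ}

lemma inner_eq_sum (x y : EuclideanSpace ℝ (Fin n)) : ⟪x, y⟫ = ∑ i, x i * y i := by
  simp [PiLp.inner_apply, RCLike.inner_apply, conj_trivial]
  exact Finset.sum_congr rfl fun _ _ => mul_comm _ _

lemma mulE_apply (A : Matrix (Fin m) (Fin n) ℝ) (x : EuclideanSpace ℝ (Fin n)) (i : Fin m) :
    mulE A x i = ∑ j, A i j * x j := by
  simp [mulE, Matrix.toEuclideanLin_apply, Matrix.mulVec, dotProduct]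

lemma rowE_apply (A : Matrix (Fin m) (Fin n) ℝ) (i : Fin m) (j : Fin n) :
    rowE A i j = A i j := rfl

lemma rowE_eq (A : Matrix (Fin m) (Fin n) ℝ) (i : Fin m) :
    rowE A i = mulE Aᵀ (EuclideanSpace.single i 1) := by
  ext j
  simp [rowE_apply, mulE_apply, EuclideanSpace.single_apply]

lemma inner_mulE (A : Matrix (Fin m) (Fin n) ℝ) (u : EuclideanSpace ℝ (Fin m))
    (v : EuclideanSpace ℝ (Fin n)) : ⟪mulE Aᵀ u, v⟫ = ⟪u, mulE A v⟫ := by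
  simp only [inner_eq_sum, mulE_apply, Finset.sum_mul, Finset.mul_sum, transpose_apply]
  rw [Finset.sum_comm]
  apply Finset.sum_congr rfl; intros; apply Finset.sum_congr rfl; intros; ring

lemma mulE_sub (A : Matrix (Fin m) (Fin n) ℝ) (x y : EuclideanSpace ℝ (Fin n)) :
    mulE A (x - y) = mulE A x - mulE A y := map_sub (Matrix.toEuclideanLin A) x y

lemma mulE_smul (A : Matrix (Fin m) (Fin n) ℝ) (c : ℝ) (x : EuclideanSpace ℝ (Fin n)) :
    mulE A (c • x) = c • mulE A x := map_smul (Matrix.toEuclideanLin A) c x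

lemma inner_mulE' (A : Matrix (Fin m) (Fin n) ℝ) (u : EuclideanSpace ℝ (Fin n))
    (v : EuclideanSpace ℝ (Fin m)) : ⟪mulE A u, v⟫ = ⟪u, mulE Aᵀ v⟫ := by
  have h := inner_mulE Aᵀ u v
  rwa [transpose_transpose] at h

lemma norm_sq_eq_sum (x : EuclideanSpace ℝ (Fin n)) : ‖x‖ ^ 2 = ∑ i, x i ^ 2 := by
  rw [← real_inner_self_eq_norm_sq, inner_eq_sum]
  simp [sq]

lemma mulE_apply_inner (A : Matrix (Fin m) (Fin n) ℝ) (x : EuclideanSpace ℝ (Fin n)) (i : Fin m) :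
    mulE A x i = ⟪rowE A i, x⟫ := by
  rw [mulE_apply, inner_eq_sum]; rfl

lemma frobSq_eq (A : Matrix (Fin m) (Fin n) ℝ) : frobSq A = ∑ i, ‖rowE A i‖ ^ 2 := by
  simp [frobSq, norm_sq_eq_sum, rowE]

/-- key orthogonal projection identity for one step -/
lemma step_norm (A : Matrix (Fin m) (Fin n) ℝ) (b : EuclideanSpace ℝ (Fin m))
    (xbar : EuclideanSpace ℝ (Fin n))
    (hnormal : mulE Aᵀ (mulE A xbar) = mulE Aᵀ b)
    (x : EuclideanSpace ℝ (Fin n)) (i : Fin m) (hw : mulE A (rowE A i) ≠ 0) :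
    ‖mulE A (rkasStep A b x i) - mulE A xbar‖ ^ 2
      = ‖mulE A x - mulE A xbar‖ ^ 2
        - ⟪mulE A (rowE A i), mulE A x - mulE A xbar⟫ ^ 2 / ‖mulE A (rowE A i)‖ ^ 2 := by
  set w := mulE A (rowE A i) with hwdef
  set y := mulE A x - mulE A xbar with hydef
  have hnw : ‖w‖ ≠ 0 := norm_ne_zero_iff.mpr hw
  have hinner : ⟪w, mulE A x - b⟫ = ⟪w, y⟫ := by
    have h0 : ⟪w, mulE A xbar - b⟫ = 0 := by
      rw [hwdef, inner_mulE']
      rw [show mulE Aᵀ (mulE A xbar - b) = mulE Aᵀ (mulE A xbar) - mulE Aᵀ b from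
        map_sub (Matrix.toEuclideanLin Aᵀ) _ _, hnormal]
      simp
    have : ⟪w, mulE A x - b⟫ - ⟪w, y⟫ = ⟪w, mulE A xbar - b⟫ := by
      rw [hydef, ← inner_sub_right]
      congr 1
      abel
    linarith [this, h0]
  set c : ℝ := ⟪w, mulE A x - b⟫ / ‖w‖ ^ 2 with hcdef
  have himage : mulE A (rkasStep A b x i) - mulE A xbar = y - c • w := by
    rw [rkasStep]
    rw [mulE_sub, mulE_smul]
    rw [hydef, ← hwdef]
    abel
  rw [himage]
  have hexp : ‖y - c • w‖ ^ 2 = ‖y‖ ^ 2 - 2 * c * ⟪w, y⟫ + c ^ 2 * ‖w‖ ^ 2 := by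
    rw [norm_sub_sq_real, real_inner_smul_right, norm_smul, real_inner_comm]
    simp [mul_pow, sq_abs]
    ring
  rw [hexp, hcdef, hinner]
  field_simp
  ring

lemma sum_inner_sq (A : Matrix (Fin m) (Fin n) ℝ) (y : EuclideanSpace ℝ (Fin m)) :
    ∑ i, ⟪mulE A (rowE A i), y⟫ ^ 2 = ‖mulE A (mulE Aᵀ y)‖ ^ 2 := by
  rw [norm_sq_eq_sum]
  apply Finset.sum_congr rfl
  intro i _
  rw [mulE_apply_inner, inner_mulE' A (rowE A i) y]

lemma mulE_zero (A : Matrix (Fin m) (Fin n) ℝ) : mulE A 0 = 0 :=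
  map_zero (Matrix.toEuclideanLin A)

lemma key_lb (A : Matrix (Fin m) (Fin n) ℝ) (σmin : ℝ) (hσ_pos : 0 < σmin)
    (hσ_lb : ∀ z ∈ Set.range (mulE Aᵀ), σmin * ‖z‖ ≤ ‖mulE A z‖)
    (z : EuclideanSpace ℝ (Fin n)) (hz : z ∈ Set.range (mulE Aᵀ)) :
    σmin ^ 2 * ‖mulE A z‖ ≤ ‖mulE A (mulE Aᵀ (mulE A z))‖ := by
  rcases eq_or_ne z 0 with rfl | hz0
  · simp [mulE_zero]
  · have hzpos : (0:ℝ) < ‖z‖ := norm_pos_iff.mpr hz0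
    have hwmem : mulE Aᵀ (mulE A z) ∈ Set.range (mulE Aᵀ) := ⟨mulE A z, rfl⟩
    have h1 : σmin * ‖mulE Aᵀ (mulE A z)‖ ≤ ‖mulE A (mulE Aᵀ (mulE A z))‖ :=
      hσ_lb _ hwmem
    have h2 : σmin * ‖z‖ ≤ ‖mulE A z‖ := hσ_lb z hz
    have h3 : ‖mulE A z‖ ^ 2 = ⟪mulE Aᵀ (mulE A z), z⟫ := by
      rw [inner_mulE, real_inner_self_eq_norm_sq]
    have h4 : ⟪mulE Aᵀ (mulE A z), z⟫ ≤ ‖mulE Aᵀ (mulE A z)‖ * ‖z‖ :=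
      real_inner_le_norm _ _
    have h5 : σmin * ‖mulE A z‖ ≤ ‖mulE Aᵀ (mulE A z)‖ := by
      nlinarith [norm_nonneg (mulE A z), norm_nonneg (mulE Aᵀ (mulE A z))]
    nlinarith [norm_nonneg (mulE A z), norm_nonneg (mulE Aᵀ (mulE A z))]

lemma rowE_ne_zero (A : Matrix (Fin m) (Fin n) ℝ) (i : Fin m) (h : A i ≠ 0) :
    rowE A i ≠ 0 := by
  intro hc
  apply h
  funext j
  have := congrFun (congrArg (fun v : EuclideanSpace ℝ (Fin n) => (v : Fin n → ℝ)) hc) j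
  simpa [rowE_apply] using this

lemma mulE_rowE_ne_zero (A : Matrix (Fin m) (Fin n) ℝ) (σmin : ℝ) (hσ_pos : 0 < σmin)
    (hσ_lb : ∀ z ∈ Set.range (mulE Aᵀ), σmin * ‖z‖ ≤ ‖mulE A z‖)
    (i : Fin m) (h : A i ≠ 0) : mulE A (rowE A i) ≠ 0 := by
  have hmem : rowE A i ∈ Set.range (mulE Aᵀ) := ⟨EuclideanSpace.single i 1, (rowE_eq A i).symm⟩
  have h1 := hσ_lb _ hmem
  have h2 : (0:ℝ) < ‖rowE A i‖ := norm_pos_iff.mpr (rowE_ne_zero A i h)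
  have : (0:ℝ) < ‖mulE A (rowE A i)‖ := lt_of_lt_of_le (by positivity) h1
  exact fun hc => by simp [hc] at this

lemma step_expect (A : Matrix (Fin m) (Fin n) ℝ) (hrows : ∀ i, A i ≠ 0)
    (b : EuclideanSpace ℝ (Fin m)) (xbar : EuclideanSpace ℝ (Fin n))
    (hnormal : mulE Aᵀ (mulE A xbar) = mulE Aᵀ b)
    (σmin : ℝ) (hσ_pos : 0 < σmin)
    (hσ_lb : ∀ z ∈ Set.range (mulE Aᵀ), σmin * ‖z‖ ≤ ‖mulE A z‖)
    (nA : ℝ) (hnA_pos : 0 < nA) (hnA_ub : ∀ z, ‖mulE A z‖ ≤ nA * ‖z‖)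
    (hF : 0 < frobSq A)
    (x : EuclideanSpace ℝ (Fin n)) (hx : x - xbar ∈ Set.range (mulE Aᵀ)) :
    ∑ i, ‖rowE A i‖ ^ 2 / frobSq A * ‖mulE A (rkasStep A b x i) - mulE A xbar‖ ^ 2
      ≤ (1 - σmin ^ 4 / (frobSq A * nA ^ 2)) * ‖mulE A x - mulE A xbar‖ ^ 2 := by
  have hw : ∀ i, mulE A (rowE A i) ≠ 0 := fun i =>
    mulE_rowE_ne_zero A σmin hσ_pos hσ_lb i (hrows i)
  set y := mulE A x - mulE A xbar with hydef
  have hsum1 : ∑ i, ‖rowE A i‖ ^ 2 / frobSq A = (1:ℝ) := by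
    rw [← Finset.sum_div, ← frobSq_eq]
    field_simp
  have hLHS : ∑ i, ‖rowE A i‖ ^ 2 / frobSq A * ‖mulE A (rkasStep A b x i) - mulE A xbar‖ ^ 2
      = ‖y‖ ^ 2 - ∑ i, ‖rowE A i‖ ^ 2 / frobSq A
          * (⟪mulE A (rowE A i), y⟫ ^ 2 / ‖mulE A (rowE A i)‖ ^ 2) := by
    rw [eq_sub_iff_add_eq, ← Finset.sum_add_distrib]
    rw [show ‖y‖^2 = (∑ i, ‖rowE A i‖ ^ 2 / frobSq A) * ‖y‖^2 by rw [hsum1, one_mul]]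
    rw [Finset.sum_mul]
    apply Finset.sum_congr rfl
    intro i _
    rw [step_norm A b xbar hnormal x i (hw i), ← hydef]
    ring
  rw [hLHS]
  have hterm : ∀ i : Fin m, ⟪mulE A (rowE A i), y⟫ ^ 2 / (frobSq A * nA ^ 2)
      ≤ ‖rowE A i‖ ^ 2 / frobSq A * (⟪mulE A (rowE A i), y⟫ ^ 2 / ‖mulE A (rowE A i)‖ ^ 2) := by
    intro i
    have hwpos : (0:ℝ) < ‖mulE A (rowE A i)‖ ^ 2 := by
      have := norm_pos_iff.mpr (hw i); positivity
    have hapos : (0:ℝ) < ‖rowE A i‖ ^ 2 := by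
      have := norm_pos_iff.mpr (rowE_ne_zero A i (hrows i)); positivity
    have h1 : ‖mulE A (rowE A i)‖ ^ 2 ≤ nA ^ 2 * ‖rowE A i‖ ^ 2 := by
      have := hnA_ub (rowE A i)
      nlinarith [norm_nonneg (mulE A (rowE A i)), norm_nonneg (rowE A i)]
    rw [div_mul_div_comm, div_le_div_iff₀ (by positivity) (by positivity)]
    nlinarith [mul_le_mul_of_nonneg_left h1
      (mul_nonneg (sq_nonneg ⟪mulE A (rowE A i), y⟫) hF.le)]
  have hSlb : σmin ^ 4 * ‖y‖ ^ 2 / (frobSq A * nA ^ 2)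
      ≤ ∑ i, ‖rowE A i‖ ^ 2 / frobSq A
          * (⟪mulE A (rowE A i), y⟫ ^ 2 / ‖mulE A (rowE A i)‖ ^ 2) := by
    calc σmin ^ 4 * ‖y‖ ^ 2 / (frobSq A * nA ^ 2)
        ≤ ‖mulE A (mulE Aᵀ y)‖ ^ 2 / (frobSq A * nA ^ 2) := by
          have hkey := key_lb A σmin hσ_pos hσ_lb (x - xbar) hx
          rw [mulE_sub, ← hydef] at hkey
          gcongr
          have hsq := mul_self_le_mul_self (by positivity : (0:ℝ) ≤ σmin ^ 2 * ‖y‖) hkey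
          nlinarith [hsq]
      _ = ∑ i, ⟪mulE A (rowE A i), y⟫ ^ 2 / (frobSq A * nA ^ 2) := by
          rw [← Finset.sum_div, sum_inner_sq]
      _ ≤ _ := Finset.sum_le_sum fun i _ => hterm i
  have hring : (1 - σmin ^ 4 / (frobSq A * nA ^ 2)) * ‖y‖ ^ 2
      = ‖y‖ ^ 2 - σmin ^ 4 * ‖y‖ ^ 2 / (frobSq A * nA ^ 2) := by ring
  rw [hring]
  linarith [hSlb]

lemma rkasStep_sub (A : Matrix (Fin m) (Fin n) ℝ) (b : EuclideanSpace ℝ (Fin m))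
    (x xbar : EuclideanSpace ℝ (Fin n)) (i : Fin m) :
    rkasStep A b x i - xbar
      = (x - xbar) - (⟪mulE A (rowE A i), mulE A x - b⟫ / ‖mulE A (rowE A i)‖ ^ 2) • rowE A i := by
  rw [rkasStep]; abel

lemma seq_mem (A : Matrix (Fin m) (Fin n) ℝ) (b : EuclideanSpace ℝ (Fin m))
    (xbar : EuclideanSpace ℝ (Fin n)) (hxbar_mem : xbar ∈ Set.range (mulE Aᵀ)) :
    ∀ (k : ℕ) (s : Fin k → Fin m), rkasSeq A b 0 k s - xbar ∈ Set.range (mulE Aᵀ) := by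
  intro k
  induction k with
  | zero =>
    intro s
    obtain ⟨u, hu⟩ := hxbar_mem
    exact ⟨-u, by rw [show mulE Aᵀ (-u) = -(mulE Aᵀ u) from map_neg (Matrix.toEuclideanLin Aᵀ) u,
      hu, rkasSeq, zero_sub]⟩
  | succ k ih =>
    intro s
    obtain ⟨v, hv⟩ := ih (fun j => s j.castSucc)
    refine ⟨v - (⟪mulE A (rowE A (s (Fin.last k))),
        mulE A (rkasSeq A b 0 k fun j => s j.castSucc) - b⟫
          / ‖mulE A (rowE A (s (Fin.last k)))‖ ^ 2) • EuclideanSpace.single (s (Fin.last k)) 1, ?_⟩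
    rw [mulE_sub, mulE_smul, hv, ← rowE_eq]
    rw [show rkasSeq A b 0 (k+1) s = rkasStep A b (rkasSeq A b 0 k fun j => s j.castSucc)
      (s (Fin.last k)) from rfl]
    rw [rkasStep_sub]

lemma expect_bound (A : Matrix (Fin m) (Fin n) ℝ) (hrows : ∀ i, A i ≠ 0)
    (b : EuclideanSpace ℝ (Fin m)) (xbar : EuclideanSpace ℝ (Fin n))
    (hxbar_mem : xbar ∈ Set.range (mulE Aᵀ))
    (hnormal : mulE Aᵀ (mulE A xbar) = mulE Aᵀ b)
    (σmin : ℝ) (hσ_pos : 0 < σmin)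
    (hσ_lb : ∀ z ∈ Set.range (mulE Aᵀ), σmin * ‖z‖ ≤ ‖mulE A z‖)
    (nA : ℝ) (hnA_pos : 0 < nA) (hnA_ub : ∀ z, ‖mulE A z‖ ≤ nA * ‖z‖)
    (hF : 0 < frobSq A)
    (hq0 : 0 ≤ 1 - σmin ^ 4 / (frobSq A * nA ^ 2)) :
    ∀ (k : ℕ),
      ∑ s : Fin k → Fin m, (∏ j, ‖rowE A (s j)‖ ^ 2 / frobSq A)
          * ‖mulE A (rkasSeq A b 0 k s) - mulE A xbar‖ ^ 2
        ≤ (1 - σmin ^ 4 / (frobSq A * nA ^ 2)) ^ k * ‖mulE A 0 - mulE A xbar‖ ^ 2 := by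
  intro k
  induction k with
  | zero =>
    rw [Fintype.sum_unique]
    simp [rkasSeq]
  | succ k ih =>
    set q := 1 - σmin ^ 4 / (frobSq A * nA ^ 2) with hqdef
    have hPnn : ∀ (t : Fin k → Fin m), 0 ≤ ∏ j, ‖rowE A (t j)‖ ^ 2 / frobSq A :=
      fun t => Finset.prod_nonneg fun j _ => by positivity
    have hre : ∑ s : Fin (k+1) → Fin m, (∏ j, ‖rowE A (s j)‖ ^ 2 / frobSq A)
          * ‖mulE A (rkasSeq A b 0 (k+1) s) - mulE A xbar‖ ^ 2
        = ∑ i : Fin m, ∑ t : Fin k → Fin m,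
            ((∏ j, ‖rowE A (t j)‖ ^ 2 / frobSq A) * (‖rowE A i‖ ^ 2 / frobSq A))
              * ‖mulE A (rkasStep A b (rkasSeq A b 0 k t) i) - mulE A xbar‖ ^ 2 := by
      calc ∑ s : Fin (k+1) → Fin m, (∏ j, ‖rowE A (s j)‖ ^ 2 / frobSq A)
              * ‖mulE A (rkasSeq A b 0 (k+1) s) - mulE A xbar‖ ^ 2
          = ∑ p : Fin m × (Fin k → Fin m),
              (∏ j, ‖rowE A (Fin.snocEquiv (fun _ => Fin m) p j)‖ ^ 2 / frobSq A)
                * ‖mulE A (rkasSeq A b 0 (k+1) (Fin.snocEquiv (fun _ => Fin m) p))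
                    - mulE A xbar‖ ^ 2 :=
            ((Fin.snocEquiv fun _ => Fin m).sum_comp _).symm
        _ = ∑ i : Fin m, ∑ t : Fin k → Fin m,
              (∏ j, ‖rowE A (Fin.snocEquiv (fun _ => Fin m) (i, t) j)‖ ^ 2 / frobSq A)
                * ‖mulE A (rkasSeq A b 0 (k+1) (Fin.snocEquiv (fun _ => Fin m) (i, t)))
                    - mulE A xbar‖ ^ 2 := Fintype.sum_prod_type _
        _ = _ := ?_
      refine Finset.sum_congr rfl fun i _ => Finset.sum_congr rfl fun t _ => ?_
      have h1 : (fun j : Fin k => Fin.snoc (α := fun _ => Fin m) t i j.castSucc) = t := by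
        funext j; simp
      have h2 : rkasSeq A b 0 (k+1) (Fin.snocEquiv (fun _ => Fin m) (i, t))
          = rkasStep A b (rkasSeq A b 0 k t) i := by
        show rkasStep A b (rkasSeq A b 0 k fun j => _) _ = _
        simp [Fin.snocEquiv, h1]
      have h3 : (∏ j, ‖rowE A (Fin.snocEquiv (fun _ => Fin m) (i, t) j)‖ ^ 2 / frobSq A)
          = (∏ j, ‖rowE A (t j)‖ ^ 2 / frobSq A) * (‖rowE A i‖ ^ 2 / frobSq A) := by
        rw [Fin.prod_univ_castSucc]
        simp [Fin.snocEquiv, h1]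
      rw [h2, h3]
    rw [hre]
    have hstep : ∀ t : Fin k → Fin m,
        ∑ i : Fin m, ((∏ j, ‖rowE A (t j)‖ ^ 2 / frobSq A) * (‖rowE A i‖ ^ 2 / frobSq A))
            * ‖mulE A (rkasStep A b (rkasSeq A b 0 k t) i) - mulE A xbar‖ ^ 2
          ≤ (∏ j, ‖rowE A (t j)‖ ^ 2 / frobSq A)
              * (q * ‖mulE A (rkasSeq A b 0 k t) - mulE A xbar‖ ^ 2) := by
      intro t
      have h4 : ∑ i : Fin m, ((∏ j, ‖rowE A (t j)‖ ^ 2 / frobSq A) * (‖rowE A i‖ ^ 2 / frobSq A))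
            * ‖mulE A (rkasStep A b (rkasSeq A b 0 k t) i) - mulE A xbar‖ ^ 2
          = (∏ j, ‖rowE A (t j)‖ ^ 2 / frobSq A) * ∑ i : Fin m, (‖rowE A i‖ ^ 2 / frobSq A)
            * ‖mulE A (rkasStep A b (rkasSeq A b 0 k t) i) - mulE A xbar‖ ^ 2 := by
        rw [Finset.mul_sum]
        exact Finset.sum_congr rfl fun i _ => by ring
      rw [h4]
      exact mul_le_mul_of_nonneg_left
        (step_expect A hrows b xbar hnormal σmin hσ_pos hσ_lb nA hnA_pos hnA_ub hF
          (rkasSeq A b 0 k t) (seq_mem A b xbar hxbar_mem k t)) (hPnn t)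
    calc ∑ i : Fin m, ∑ t : Fin k → Fin m,
            ((∏ j, ‖rowE A (t j)‖ ^ 2 / frobSq A) * (‖rowE A i‖ ^ 2 / frobSq A))
              * ‖mulE A (rkasStep A b (rkasSeq A b 0 k t) i) - mulE A xbar‖ ^ 2
        = ∑ t : Fin k → Fin m, ∑ i : Fin m,
            ((∏ j, ‖rowE A (t j)‖ ^ 2 / frobSq A) * (‖rowE A i‖ ^ 2 / frobSq A))
              * ‖mulE A (rkasStep A b (rkasSeq A b 0 k t) i) - mulE A xbar‖ ^ 2 :=
          Finset.sum_comm
      _ ≤ ∑ t : Fin k → Fin m, (∏ j, ‖rowE A (t j)‖ ^ 2 / frobSq A)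
              * (q * ‖mulE A (rkasSeq A b 0 k t) - mulE A xbar‖ ^ 2) :=
          Finset.sum_le_sum fun t _ => hstep t
      _ = q * ∑ t : Fin k → Fin m, (∏ j, ‖rowE A (t j)‖ ^ 2 / frobSq A)
              * ‖mulE A (rkasSeq A b 0 k t) - mulE A xbar‖ ^ 2 := by
          rw [Finset.mul_sum]
          exact Finset.sum_congr rfl fun t _ => by ring
      _ ≤ q * (q ^ k * ‖mulE A 0 - mulE A xbar‖ ^ 2) :=
          mul_le_mul_of_nonneg_left ih hq0
      _ = q ^ (k+1) * ‖mulE A 0 - mulE A xbar‖ ^ 2 := by ring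


/-- Remark 3.4, iteration complexity: for the RKAS method started
at `x⁰ = 0`, with `ε₁ = ‖A x⁰ − A x̄‖²` and `ε > 0`, if `ε₁ > ε σ_min(A)²` and
`k ≥ log(ε₁/(ε σ_min(A)²)) ‖A‖_F² ‖A‖₂² / σ_min(A)⁴`, then `E[‖x^k − x̄‖²] ≤ ε`. -/
theorem rkas_iteration_complexity (m n : ℕ) (A : Matrix (Fin m) (Fin n) ℝ)
    (hA : A ≠ 0) (hrows : ∀ i, A i ≠ 0)
    (b : EuclideanSpace ℝ (Fin m))
    -- `x̄ = A†b`: the unique vector in `Range(Aᵀ)` satisfying `Aᵀ A x̄ = Aᵀ b`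
    (xbar : EuclideanSpace ℝ (Fin n))
    (hxbar_mem : xbar ∈ Set.range (mulE Aᵀ))
    (hxbar_normal : mulE Aᵀ (mulE A xbar) = mulE Aᵀ b)
    -- `σ_min(A)`: the smallest nonzero singular value of `A`
    (σmin : ℝ) (hσ_pos : 0 < σmin)
    (hσ_lb : ∀ z ∈ Set.range (mulE Aᵀ), σmin * ‖z‖ ≤ ‖mulE A z‖)
    (hσ_att : ∃ z ∈ Set.range (mulE Aᵀ), z ≠ 0 ∧ ‖mulE A z‖ = σmin * ‖z‖)
    -- `nA = ‖A‖₂`: the spectral norm of `A`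
    (nA : ℝ) (hnA_ub : ∀ z, ‖mulE A z‖ ≤ nA * ‖z‖)
    (hnA_att : ∃ z : EuclideanSpace ℝ (Fin n), z ≠ 0 ∧ ‖mulE A z‖ = nA * ‖z‖)
    -- `ε₁ = ‖A x⁰ − A x̄‖²` with `x⁰ = 0`
    (ε₁ : ℝ) (hε₁ : ε₁ = ‖mulE A 0 - mulE A xbar‖ ^ 2)
    -- the target accuracy `ε`
    (ε : ℝ) (hε_pos : 0 < ε) (hε_lt : ε * σmin ^ 2 < ε₁)
    -- the number of iterations
    (k : ℕ)
    (hk : Real.log (ε₁ / (ε * σmin ^ 2)) * (frobSq A * nA ^ 2) / σmin ^ 4 ≤ (k : ℝ)) :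
    ∑ s : Fin k → Fin m,
        (∏ j, ‖rowE A (s j)‖ ^ 2 / frobSq A) *
          ‖rkasSeq A b 0 k s - xbar‖ ^ 2
      ≤ ε := by
  have hF : 0 < frobSq A := by
    obtain ⟨i, j, hij⟩ : ∃ i j, A i j ≠ 0 := by
      by_contra h; push_neg at h
      exact hA (by ext i j; simpa using h i j)
    have h1 : A i j ^ 2 ≤ ∑ j', A i j' ^ 2 :=
      Finset.single_le_sum (f := fun j' => A i j' ^ 2)
        (fun _ _ => sq_nonneg _) (Finset.mem_univ j)
    have h2 : ∑ j', A i j' ^ 2 ≤ frobSq A :=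
      Finset.single_le_sum (f := fun i' => ∑ j', A i' j' ^ 2)
        (fun _ _ => Finset.sum_nonneg fun _ _ => sq_nonneg _) (Finset.mem_univ i)
    have h3 : 0 < A i j ^ 2 := by positivity
    linarith
  obtain ⟨z₀, hz₀mem, hz₀ne, hz₀eq⟩ := hσ_att
  have hz₀pos : 0 < ‖z₀‖ := norm_pos_iff.mpr hz₀ne
  have hσnA : σmin ≤ nA := by
    have h := hnA_ub z₀
    rw [hz₀eq] at h
    exact le_of_mul_le_mul_right (by linarith) hz₀pos
  have hnA_pos : 0 < nA := lt_of_lt_of_le hσ_pos hσnA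
  have hnA2F : nA ^ 2 ≤ frobSq A := by
    obtain ⟨z, hzne, hzeq⟩ := hnA_att
    have hzpos : 0 < ‖z‖ := norm_pos_iff.mpr hzne
    have h1 : ‖mulE A z‖ ^ 2 = ∑ i, ⟪rowE A i, z⟫ ^ 2 := by
      rw [norm_sq_eq_sum]
      exact Finset.sum_congr rfl fun i _ => by rw [mulE_apply_inner]
    have h2 : ∀ i : Fin m, ⟪rowE A i, z⟫ ^ 2 ≤ ‖rowE A i‖ ^ 2 * ‖z‖ ^ 2 := by
      intro i
      have habs := abs_real_inner_le_norm (rowE A i) z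
      nlinarith [abs_nonneg ⟪rowE A i, z⟫, sq_abs ⟪rowE A i, z⟫,
        norm_nonneg (rowE A i), norm_nonneg z]
    have h3 : ∑ i, ⟪rowE A i, z⟫ ^ 2 ≤ frobSq A * ‖z‖ ^ 2 := by
      rw [frobSq_eq, Finset.sum_mul]
      exact Finset.sum_le_sum fun i _ => h2 i
    have h5 : ‖mulE A z‖ ^ 2 = nA ^ 2 * ‖z‖ ^ 2 := by rw [hzeq]; ring
    have h4 : nA ^ 2 * ‖z‖ ^ 2 ≤ frobSq A * ‖z‖ ^ 2 := by linarith
    exact le_of_mul_le_mul_right h4 (by positivity)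
  have hq0 : 0 ≤ 1 - σmin ^ 4 / (frobSq A * nA ^ 2) := by
    have hσ2 : σmin ^ 2 ≤ nA ^ 2 := by nlinarith
    have h : σmin ^ 4 ≤ frobSq A * nA ^ 2 := by nlinarith
    have hpos : 0 < frobSq A * nA ^ 2 := by positivity
    rw [sub_nonneg]
    exact (div_le_one hpos).mpr h
  set q := 1 - σmin ^ 4 / (frobSq A * nA ^ 2) with hqd
  set t := σmin ^ 4 / (frobSq A * nA ^ 2) with htd
  have ht_pos : 0 < t := by rw [htd]; positivity
  have hε₁pos : 0 < ε₁ := lt_trans (by positivity) hε_lt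
  have hmain := expect_bound A hrows b xbar hxbar_mem hxbar_normal σmin hσ_pos hσ_lb
    nA hnA_pos hnA_ub hF hq0 k
  rw [← hε₁] at hmain
  have hqk : q ^ k ≤ ε * σmin ^ 2 / ε₁ := by
    have hL : Real.log (ε₁ / (ε * σmin ^ 2)) ≤ (k : ℝ) * t := by
      have h1 := mul_le_mul_of_nonneg_right hk ht_pos.le
      have h2 : Real.log (ε₁ / (ε * σmin ^ 2)) * (frobSq A * nA ^ 2) / σmin ^ 4 * t
          = Real.log (ε₁ / (ε * σmin ^ 2)) := by
        rw [htd]; field_simp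
      rw [h2] at h1
      exact h1
    have hq_exp : q ≤ Real.exp (-t) := by
      have h := Real.add_one_le_exp (-t)
      linarith [hqd, h]
    calc q ^ k ≤ Real.exp (-t) ^ k := pow_le_pow_left₀ hq0 hq_exp k
      _ = Real.exp (-((k : ℝ) * t)) := by
          rw [← Real.exp_nat_mul]; ring_nf
      _ ≤ Real.exp (-(Real.log (ε₁ / (ε * σmin ^ 2)))) :=
          Real.exp_le_exp.mpr (by linarith)
      _ = ε * σmin ^ 2 / ε₁ := by
          rw [← Real.log_inv, Real.exp_log (by positivity), inv_div]
  have hPnn : ∀ s : Fin k → Fin m, 0 ≤ ∏ j, ‖rowE A (s j)‖ ^ 2 / frobSq A :=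
    fun s => Finset.prod_nonneg fun j _ => by positivity
  have hterm : ∀ s : Fin k → Fin m,
      (∏ j, ‖rowE A (s j)‖ ^ 2 / frobSq A) * ‖rkasSeq A b 0 k s - xbar‖ ^ 2
        ≤ (∏ j, ‖rowE A (s j)‖ ^ 2 / frobSq A)
            * (‖mulE A (rkasSeq A b 0 k s) - mulE A xbar‖ ^ 2 / σmin ^ 2) := by
    intro s
    apply mul_le_mul_of_nonneg_left _ (hPnn s)
    have hmem := seq_mem A b xbar hxbar_mem k s
    have h1 := hσ_lb _ hmem
    rw [mulE_sub] at h1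
    rw [le_div_iff₀ (by positivity)]
    have h2 := mul_self_le_mul_self
      (by positivity : (0:ℝ) ≤ σmin * ‖rkasSeq A b 0 k s - xbar‖) h1
    nlinarith [h2]
  calc ∑ s : Fin k → Fin m,
        (∏ j, ‖rowE A (s j)‖ ^ 2 / frobSq A) * ‖rkasSeq A b 0 k s - xbar‖ ^ 2
      ≤ ∑ s : Fin k → Fin m, (∏ j, ‖rowE A (s j)‖ ^ 2 / frobSq A)
          * (‖mulE A (rkasSeq A b 0 k s) - mulE A xbar‖ ^ 2 / σmin ^ 2) :=
        Finset.sum_le_sum fun s _ => hterm s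
    _ = (∑ s : Fin k → Fin m, (∏ j, ‖rowE A (s j)‖ ^ 2 / frobSq A)
          * ‖mulE A (rkasSeq A b 0 k s) - mulE A xbar‖ ^ 2) / σmin ^ 2 := by
        rw [Finset.sum_div]
        exact Finset.sum_congr rfl fun s _ => by ring
    _ ≤ (q ^ k * ε₁) / σmin ^ 2 := by gcongr
    _ ≤ ε := by
        have h6 := mul_le_mul_of_nonneg_right hqk hε₁pos.le
        have h7 : ε * σmin ^ 2 / ε₁ * ε₁ = ε * σmin ^ 2 := by field_simp
        rw [div_le_iff₀ (by positivity)]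
        linarith
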